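/- Suppose 1/n ≪ η ≪ ε, 1/r and r ≥ 3. Let c_r = 1/25 if r = 3 and c_r = 9/(10^7 r^3) if r ≥ 4, and assume the K_r-decomposition theorem for r-partite graphs with minimum partite degree (1 − c'_r + ε)n (where c'_r = 1/25 for r=3 and 1/(10^6 r^3) for r≥4) holds. Let T_1,...,T_{r−2} be mutually orthogonal partial n×n Latin squares drawn in the same grid, such that each row, each column, and each symbol of each T_m is used at most (c_r − ε)n times. Then T_1,...,T_{r−2} can be completed to a sequence of mutually orthogonal n×n Latin squares. -/

import Mathlib

open Finset

/-- `G` has a `K_r`-decomposition: a collection of `r`-cliques which are pairwise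
edge-disjoint and cover all edges of `G`. -/
def HasKrDecomp {β : Type*} [DecidableEq β] (r : ℕ) (G : SimpleGraph β) : Prop :=
  ∃ D : Finset (Finset β),
    (∀ S ∈ D, S.card = r) ∧
    (∀ S ∈ D, ∀ x ∈ S, ∀ y ∈ S, x ≠ y → G.Adj x y) ∧
    (∀ S ∈ D, ∀ T ∈ D, S ≠ T → (S ∩ T).card ≤ 1) ∧
    (∀ x y : β, G.Adj x y → ∃ S ∈ D, x ∈ S ∧ y ∈ S)

/-!
A sequence of `r - 2` partial MOLS is a partial orthogonal array: the filled cell `(i, j)` is the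
partial `r`-tuple `(i, j, T₁ i j, …, T_{r-2} i j)`, and the Latin and orthogonality conditions
say exactly that two distinct tuples never agree in two defined coordinates.

For `r ≥ 4` the missing entries of the occupied cells are first filled greedily, keeping the
multiplicity of every symbol in every coordinate below a cap `M` with `c_r n < M < c'_r n`: a new
entry is blocked by at most `(r - 1) M` conflicts through the other coordinates of its tuple and
by at most `|support| / M` saturated symbols, fewer than `n` in total.

The pairs of points not yet covered by a tuple form an `r`-partite graph, the leave, in which a
point of multiplicity `μ` has exactly `n - μ ≥ n - M` neighbours in every other part. The assumed
decomposition theorem splits the leave into copies of `K_r`; each copy is one more tuple, and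
together with the filled cells they form an orthogonal array of strength two and index one,
whose coordinates beyond the first two are the required mutually orthogonal Latin squares.
-/

variable {ι κ α : Type*}

def IsPartialOA (I : Finset ι) (f : ι → κ → Option α) : Prop :=
  ∀ i ∈ I, ∀ j ∈ I, ∀ a b, a ≠ b → ∀ x y,
    f i a = some x → f j a = some x → f i b = some y → f j b = some y → i = j

def occCount [DecidableEq α] (I : Finset ι) (f : ι → κ → Option α) (a : κ) (x : α) : ℕ :=
  #{i ∈ I | f i a = some x}

lemma sum_occCount_le [Fintype α] [DecidableEq α] (I : Finset ι) (f : ι → κ → Option α) (a : κ) :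
    ∑ x, occCount I f a x ≤ #I := by
  rw [card_eq_sum_card_fiberwise (f := (f · a)) (t := univ) fun _ _ => mem_univ _,
    Fintype.sum_option]
  exact Nat.le_add_left _ _

section SetEntry

variable [DecidableEq ι] [DecidableEq κ]

def setEntry (f : ι → κ → Option α) (i : ι) (c : κ) (x : α) : ι → κ → Option α :=
  fun j a => if j = i ∧ a = c then some x else f j a

variable {I : Finset ι} {f : ι → κ → Option α} {i : ι} {c : κ} {x : α}

lemma setEntry_of_ne {j : ι} (hj : j ≠ i) : setEntry f i c x j = f j := by
  ext a : 1
  simp [setEntry, hj]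

lemma setEntry_self_eq_some {a : κ} {z : α} :
    setEntry f i c x i a = some z ↔ a = c ∧ z = x ∨ a ≠ c ∧ f i a = some z := by
  by_cases h : a = c <;> simp [setEntry, h, eq_comm]

lemma isPartialOA_setEntry (hf : IsPartialOA I f) (hi : i ∈ I)
    (hx : ∀ b y, f i b = some y → ∀ j ∈ I, f j b = some y → f j c ≠ some x) :
    IsPartialOA I (setEntry f i c x) := by
  have key : ∀ j ∈ I, j ≠ i → ∀ a b, a ≠ b → ∀ y z, setEntry f i c x i a = some y →
      f j a = some y → setEntry f i c x i b = some z → f j b = some z → False := by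
    intro j hj hji a b hab y z hia hja hib hjb
    rw [setEntry_self_eq_some] at hia hib
    rcases hia with ⟨rfl, rfl⟩ | ⟨ha, hia⟩ <;> rcases hib with ⟨rfl, rfl⟩ | ⟨hb, hib⟩
    · exact hab rfl
    · exact hx b z hib j hj hjb hja
    · exact hx a y hia j hj hja hjb
    · exact hji (hf i hi j hj a b hab y z hia hja hib hjb).symm
  intro j hj j' hj' a b hab y z h1 h2 h3 h4
  by_cases hji : j = i <;> by_cases hj'i : j' = i
  · rw [hji, hj'i]
  · subst hji
    rw [setEntry_of_ne hj'i] at h2 h4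
    exact (key j' hj' hj'i a b hab y z h1 h2 h3 h4).elim
  · subst hj'i
    rw [setEntry_of_ne hji] at h1 h3
    exact (key j hj hji a b hab y z h2 h1 h4 h3).elim
  · rw [setEntry_of_ne hji] at h1 h3
    rw [setEntry_of_ne hj'i] at h2 h4
    exact hf j hj j' hj' a b hab y z h1 h2 h3 h4

lemma occCount_setEntry_le [DecidableEq α] {M : ℕ} (hocc : ∀ a z, occCount I f a z ≤ M)
    (hx : occCount I f c x < M) (a : κ) (z : α) : occCount I (setEntry f i c x) a z ≤ M := by
  by_cases h : a = c ∧ z = x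
  · obtain ⟨rfl, rfl⟩ := h
    calc occCount I (setEntry f i a z) a z ≤ #(insert i {j ∈ I | f j a = some z}) := by
          refine card_le_card fun j hj => ?_
          simp only [mem_filter, setEntry, mem_insert] at hj ⊢
          by_cases hji : j = i <;> simp_all
      _ ≤ M := (card_insert_le _ _).trans hx
  · refine (card_le_card fun j hj => ?_).trans (hocc a z)
    rw [mem_filter] at hj ⊢
    simp only [setEntry] at hj
    split_ifs at hj with hja
    · exact absurd ⟨hja.2, (Option.some_injective _ hj.2).symm⟩ h
    · exact hj

end SetEntry

section Greedy

variable [Fintype κ] [DecidableEq κ] [Fintype α] [DecidableEq α]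
  {I : Finset ι} {f : ι → κ → Option α} {M : ℕ}

lemma exists_good_symbol (hM : 0 < M) (hocc : ∀ a x, occCount I f a x ≤ M)
    (hroom : (Fintype.card κ - 1) * M + #I / M < Fintype.card α) {i : ι} {c : κ}
    (hc : f i c = none) :
    ∃ x, occCount I f c x < M ∧
      ∀ b y, f i b = some y → ∀ j ∈ I, f j b = some y → f j c ≠ some x := by
  let conflicts (b : κ) : Finset (Option α) :=
    {j ∈ I | f i b ≠ none ∧ f j b = f i b}.image (f · c)
  have hconflicts (b : κ) : #(conflicts b) ≤ M := by
    refine card_image_le.trans ?_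
    rcases hb : f i b with _ | y
    · simp
    · simpa [hb, occCount] using hocc b y
  have hbad₁ : #{x | some x ∈ univ.biUnion conflicts} ≤ (Fintype.card κ - 1) * M := by
    have hc' : conflicts c = ∅ := by simp [conflicts, hc]
    calc #{x | some x ∈ univ.biUnion conflicts}
        ≤ #(univ.biUnion conflicts) :=
          card_le_card_of_injOn some (fun x hx => (mem_filter.1 hx).2)
            (Option.some_injective _).injOn
      _ = #((univ.erase c).biUnion conflicts) := by
          nth_rewrite 1 [← insert_erase (mem_univ c)]
          rw [biUnion_insert, hc', empty_union]
      _ ≤ ∑ b ∈ univ.erase c, #(conflicts b) := card_biUnion_le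
      _ ≤ (Fintype.card κ - 1) * M := by
          refine (sum_le_card_nsmul _ _ _ fun b _ => hconflicts b).trans ?_
          rw [card_erase_of_mem (mem_univ c), card_univ, smul_eq_mul]
  have hbad₂ : #{x | M ≤ occCount I f c x} ≤ #I / M := by
    rw [Nat.le_div_iff_mul_le hM]
    calc #{x | M ≤ occCount I f c x} * M
        = ∑ x ∈ {x | M ≤ occCount I f c x}, M := by rw [sum_const, smul_eq_mul]
      _ ≤ ∑ x ∈ {x | M ≤ occCount I f c x}, occCount I f c x :=
          sum_le_sum fun x hx => (mem_filter.1 hx).2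
      _ ≤ ∑ x, occCount I f c x := sum_le_sum_of_subset (subset_univ _)
      _ ≤ #I := sum_occCount_le I f c
  have hbad :
      #{x | some x ∈ univ.biUnion conflicts ∨ M ≤ occCount I f c x} < #(univ : Finset α) := by
    rw [filter_or, card_univ]
    exact (card_union_le _ _).trans_lt (by omega)
  obtain ⟨x, -, hx⟩ := exists_mem_notMem_of_card_lt_card hbad
  simp only [mem_filter, mem_univ, true_and, not_or, not_le] at hx
  refine ⟨x, hx.2, fun b y hb j hj hjb hjc => hx.1 ?_⟩
  simp only [mem_biUnion, mem_univ, true_and, conflicts, mem_image, mem_filter]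
  exact ⟨b, j, ⟨hj, by simp [hb], by rw [hjb, hb]⟩, hjc⟩

theorem exists_total_extension [DecidableEq ι] (hM : 0 < M) (hf : IsPartialOA I f)
    (hocc : ∀ a x, occCount I f a x ≤ M)
    (hroom : (Fintype.card κ - 1) * M + #I / M < Fintype.card α) :
    ∃ g : ι → κ → Option α, IsPartialOA I g ∧ (∀ i ∈ I, ∀ a, g i a ≠ none) ∧
      (∀ a x, occCount I g a x ≤ M) ∧ ∀ i ∈ I, ∀ a x, f i a = some x → g i a = some x := by
  induction hN : #{p ∈ I ×ˢ (univ : Finset κ) | f p.1 p.2 = none} generalizing f with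
  | zero =>
    refine ⟨f, hf, fun i hi a ha => ?_, hocc, fun _ _ _ _ h => h⟩
    have : (i, a) ∈ ({p ∈ I ×ˢ univ | f p.1 p.2 = none} : Finset _) := by simp [hi, ha]
    exact card_ne_zero_of_mem this hN
  | succ N ih =>
    obtain ⟨⟨i, c⟩, hic⟩ : ({p ∈ I ×ˢ univ | f p.1 p.2 = none} : Finset _).Nonempty := by
      rw [← card_pos, hN]; exact N.succ_pos
    simp only [mem_filter, mem_product, mem_univ, and_true] at hic
    obtain ⟨hi, hc⟩ := hic
    obtain ⟨x, hx, hxfree⟩ := exists_good_symbol hM hocc hroom hc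
    have hmissing : {p ∈ I ×ˢ (univ : Finset κ) | setEntry f i c x p.1 p.2 = none} =
        ({p ∈ I ×ˢ univ | f p.1 p.2 = none} : Finset _).erase (i, c) := by
      ext ⟨j, a⟩
      rw [mem_filter, mem_erase, mem_filter]
      by_cases h : j = i ∧ a = c
      · simp [setEntry, h]
      · simp [setEntry, h, Prod.ext_iff]
    obtain ⟨g, hg, htot, hgocc, hfg⟩ := ih (isPartialOA_setEntry hf hi hxfree)
      (occCount_setEntry_le hocc hx)
      (by rw [hmissing, card_erase_of_mem (by simp [hi, hc]), hN, Nat.add_sub_cancel])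
    refine ⟨g, hg, htot, hgocc, fun j hj a z hz => hfg j hj a z ?_⟩
    have : ¬(j = i ∧ a = c) := by
      rintro ⟨rfl, rfl⟩
      simp [hc] at hz
    simp [setEntry, this, hz]

end Greedy

def leaveGraph (I : Finset ι) (f : ι → κ → Option α) : SimpleGraph (κ × α) where
  Adj u v := u.1 ≠ v.1 ∧ ∀ i ∈ I, ¬(f i u.1 = some u.2 ∧ f i v.1 = some v.2)
  symm := ⟨fun _ _ h => ⟨h.1.symm, fun i hi h' => h.2 i hi h'.symm⟩⟩
  loopless := ⟨fun _ h => h.1 rfl⟩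

lemma ncard_leaveGraph_adj [Fintype α] [DecidableEq α] {I : Finset ι} {f : ι → κ → Option α}
    (hf : IsPartialOA I f) (htot : ∀ i ∈ I, ∀ a, f i a ≠ none) {a b : κ} (hab : a ≠ b) (x : α) :
    {y | (leaveGraph I f).Adj (a, x) (b, y)}.ncard = Fintype.card α - occCount I f a x := by
  have hused : #{y | ∃ i ∈ I, f i a = some x ∧ f i b = some y} = occCount I f a x := by
    refine (card_nbij (fun i => (f i b).getD x) (fun i hi => ?_) (fun i hi j hj hij => ?_)
      (fun y hy => ?_)).symm
    · simp only [coe_filter, mem_univ, true_and, Set.mem_ofPred] at hi ⊢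
      obtain ⟨y, hy⟩ := Option.ne_none_iff_exists'.1 (htot i hi.1 b)
      exact ⟨i, hi.1, hi.2, by simp [hy]⟩
    · simp only [coe_filter, Set.mem_ofPred] at hi hj
      obtain ⟨y, hy⟩ := Option.ne_none_iff_exists'.1 (htot i hi.1 b)
      obtain ⟨y', hy'⟩ := Option.ne_none_iff_exists'.1 (htot j hj.1 b)
      simp only [hy, hy', Option.getD_some] at hij
      subst hij
      exact hf i hi.1 j hj.1 a b hab x y hi.2 hj.2 hy hy'
    · simp only [coe_filter, mem_univ, true_and, Set.mem_ofPred] at hy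
      obtain ⟨i, hi, hia, hib⟩ := hy
      exact ⟨i, by simp [hi, hia], by simp [hib]⟩
  have hadj : {y | (leaveGraph I f).Adj (a, x) (b, y)} =
      ↑(({y | ∃ i ∈ I, f i a = some x ∧ f i b = some y} : Finset α)ᶜ) := by
    ext y
    simp [leaveGraph, hab]
  rw [hadj, Set.ncard_coe_finset, card_compl, hused]

def PartiteKrDecomposable (r n : ℕ) (δ : ℝ) (β : Type*) [DecidableEq β] : Prop :=
  ∀ (V : Fin r → Finset β) (G : SimpleGraph β),
    (∀ j₁ j₂ : Fin r, j₁ ≠ j₂ → Disjoint (V j₁) (V j₂)) →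
    (∀ x, ∃ j, x ∈ V j) →
    (∀ j, (V j).card = n) →
    (∀ x y, G.Adj x y → ∃ j₁ j₂ : Fin r, j₁ ≠ j₂ ∧ x ∈ V j₁ ∧ y ∈ V j₂) →
    (∀ j₁ j₂ : Fin r, ∀ v, v ∉ V j₁ → v ∉ V j₂ →
      ((V j₁ : Set β) ∩ G.neighborSet v).ncard = ((V j₂ : Set β) ∩ G.neighborSet v).ncard) →
    (∀ (j : Fin r) v, v ∉ V j → δ ≤ (((V j : Set β) ∩ G.neighborSet v).ncard : ℝ)) →
    HasKrDecomp r G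

lemma hasKrDecomp_of_partite [Fintype κ] [DecidableEq κ] [Fintype α] [DecidableEq α] {r n : ℕ}
    {δ : ℝ} (hκ : Fintype.card κ = r) (hα : Fintype.card α = n)
    (hdec : PartiteKrDecomposable r n δ (κ × α))
    {G : SimpleGraph (κ × α)} (hG : ∀ u v, G.Adj u v → u.1 ≠ v.1) (d : κ × α → ℕ)
    (hd : ∀ v b, b ≠ v.1 → {y | G.Adj v (b, y)}.ncard = d v) (hδ : ∀ v, δ ≤ d v) :
    HasKrDecomp r G := by
  let e : Fin r ≃ κ := (Fintype.equivFinOfCardEq hκ).symm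
  have hmem {j : Fin r} {u : κ × α} : u ∈ ({e j} ×ˢ univ : Finset (κ × α)) ↔ u.1 = e j := by
    simp only [mem_product, mem_singleton, mem_univ, and_true]
  have hdeg (j : Fin r) (v : κ × α) (hv : v ∉ ({e j} ×ˢ univ : Finset (κ × α))) :
      ((({e j} ×ˢ univ : Finset (κ × α)) : Set (κ × α)) ∩ G.neighborSet v).ncard = d v := by
    have : (({e j} ×ˢ univ : Finset (κ × α)) : Set (κ × α)) ∩ G.neighborSet v =
        Prod.mk (e j) '' {y | G.Adj v (e j, y)} := by
      ext ⟨a, y⟩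
      simp only [Set.mem_inter_iff, mem_coe, hmem, SimpleGraph.mem_neighborSet, Set.mem_image,
        Set.mem_ofPred_eq, Prod.mk.injEq]
      constructor
      · rintro ⟨rfl, h⟩
        exact ⟨y, h, rfl, rfl⟩
      · rintro ⟨y, h, rfl, rfl⟩
        exact ⟨rfl, h⟩
    rw [this, Set.ncard_image_of_injective _ (Prod.mk_right_injective (e j)),
      hd v (e j) (fun h => hv (hmem.2 h.symm))]
  refine hdec (fun j => {e j} ×ˢ univ) G (fun j₁ j₂ h => ?_) (fun u => ⟨e.symm u.1, by simp⟩)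
    (fun j => by simp [hα]) (fun u v huv => ⟨e.symm u.1, e.symm v.1, ?_, by simp, by simp⟩)
    (fun j₁ j₂ v h₁ h₂ => by rw [hdeg j₁ v h₁, hdeg j₂ v h₂]) (fun j v hv => hdeg j v hv ▸ hδ v)
  · rw [disjoint_left]
    intro u h₁ h₂
    exact e.injective.ne h (hmem.1 h₁ ▸ hmem.1 h₂)
  · simpa using hG u v huv

lemma hasKrDecomp_leaveGraph [Fintype κ] [DecidableEq κ] [Fintype α] [DecidableEq α] {r n M : ℕ}
    {δ : ℝ} (hκ : Fintype.card κ = r) (hα : Fintype.card α = n)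
    (hdec : PartiteKrDecomposable r n δ (κ × α)) {I : Finset ι} {f : ι → κ → Option α}
    (hf : IsPartialOA I f) (htot : ∀ i ∈ I, ∀ a, f i a ≠ none)
    (hocc : ∀ a x, occCount I f a x ≤ M) (hδ : δ ≤ n - M) :
    HasKrDecomp r (leaveGraph I f) := by
  refine hasKrDecomp_of_partite hκ hα hdec (fun _ _ h => h.1) _
    (fun v b hb => ncard_leaveGraph_adj hf htot (Ne.symm hb) v.2) fun v => hδ.trans ?_
  have hM : (occCount I f v.1 v.2 : ℝ) ≤ M := by exact_mod_cast hocc v.1 v.2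
  have hsub : (n : ℝ) ≤ (n - occCount I f v.1 v.2 : ℕ) + occCount I f v.1 v.2 := by
    exact_mod_cast le_tsub_add
  rw [hα]
  linarith

section Cliques

variable {G : SimpleGraph (κ × α)} {C : Finset (κ × α)}

lemma eq_of_mem_clique (hG : ∀ u v, G.Adj u v → u.1 ≠ v.1)
    (hC : ∀ u ∈ C, ∀ v ∈ C, u ≠ v → G.Adj u v) {a : κ} {x y : α} (hx : (a, x) ∈ C)
    (hy : (a, y) ∈ C) : x = y := by
  by_contra h
  exact hG _ _ (hC _ hx _ hy (by simp [h])) rfl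

lemma exists_mem_clique [Fintype κ] [DecidableEq κ] (hG : ∀ u v, G.Adj u v → u.1 ≠ v.1)
    (hC : ∀ u ∈ C, ∀ v ∈ C, u ≠ v → G.Adj u v) (hcard : #C = Fintype.card κ) (a : κ) :
    ∃ x, (a, x) ∈ C := by
  have hinj : Set.InjOn Prod.fst (C : Set (κ × α)) := fun u hu v hv h => by
    by_contra huv
    exact hG u v (hC u hu v hv huv) h
  have : C.image Prod.fst = univ := eq_univ_of_card _ (by rw [card_image_of_injOn hinj, hcard])
  obtain ⟨u, hu, rfl⟩ := mem_image.1 (this ▸ mem_univ a)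
  exact ⟨u.2, hu⟩

lemma eq_of_mem_of_mem {β : Type*} [DecidableEq β] {D : Finset (Finset β)}
    (hD : ∀ S ∈ D, ∀ T ∈ D, S ≠ T → #(S ∩ T) ≤ 1) {C C' : Finset β} (hC : C ∈ D) (hC' : C' ∈ D)
    {u v : β} (huv : u ≠ v) (hu : u ∈ C) (hv : v ∈ C) (hu' : u ∈ C') (hv' : v ∈ C') : C = C' := by
  by_contra hne
  have hsub : {u, v} ⊆ C ∩ C' := by simp [insert_subset_iff, hu, hv, hu', hv']
  have := (card_le_card hsub).trans (hD C hC C' hC' hne)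
  rw [card_pair huv] at this
  omega

end Cliques

structure IsOA (S : Set (κ → α)) : Prop where
  exists_mem : ∀ a b, a ≠ b → ∀ x y, ∃ t ∈ S, t a = x ∧ t b = y
  eq_of_eq_of_eq : ∀ s ∈ S, ∀ t ∈ S, ∀ a b, a ≠ b → s a = t a → s b = t b → s = t

theorem exists_isOA_of_hasKrDecomp [Fintype κ] [DecidableEq κ] [DecidableEq α] {I : Finset ι}
    {f : ι → κ → Option α} (hf : IsPartialOA I f) (htot : ∀ i ∈ I, ∀ a, f i a ≠ none)
    (hD : HasKrDecomp (Fintype.card κ) (leaveGraph I f)) :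
    ∃ S : Set (κ → α), IsOA S ∧ ∀ i ∈ I, ∃ t ∈ S, ∀ a, f i a = some (t a) := by
  obtain ⟨D, hcard, hclique, hinter, hcover⟩ := hD
  have hG : ∀ u v, (leaveGraph I f).Adj u v → u.1 ≠ v.1 := fun _ _ h => h.1
  choose vert hvert using fun C hC => exists_mem_clique hG (hclique C hC) (hcard C hC)
  have hvert_eq {C} (hC : C ∈ D) {a x} (hx : (a, x) ∈ C) : vert C hC a = x :=
    eq_of_mem_clique hG (hclique C hC) (hvert C hC a) hx
  have htuple (i) (hi : i ∈ I) : ∃ t : κ → α, ∀ a, f i a = some (t a) := by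
    choose t ht using fun a => Option.ne_none_iff_exists'.1 (htot i hi a)
    exact ⟨t, ht⟩
  have hfresh {i} (hi : i ∈ I) {C} (hC : C ∈ D) {a b} (hab : a ≠ b)
      (ha : f i a = some (vert C hC a)) (hb : f i b = some (vert C hC b)) : False :=
    (hclique C hC _ (hvert C hC a) _ (hvert C hC b) (by simp [hab])).2 i hi ⟨ha, hb⟩
  refine ⟨{t | (∃ i ∈ I, ∀ a, f i a = some (t a)) ∨ ∃ C, ∃ hC : C ∈ D, t = vert C hC}, ⟨?_, ?_⟩,
    fun i hi => ?_⟩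
  · intro a b hab x y
    by_cases h : ∃ i ∈ I, f i a = some x ∧ f i b = some y
    · obtain ⟨i, hi, ha, hb⟩ := h
      obtain ⟨t, ht⟩ := htuple i hi
      exact ⟨t, Or.inl ⟨i, hi, ht⟩, by simpa [ht] using ha, by simpa [ht] using hb⟩
    · obtain ⟨C, hC, hx, hy⟩ := hcover (a, x) (b, y) ⟨hab, fun i hi h' => h ⟨i, hi, h'⟩⟩
      exact ⟨vert C hC, Or.inr ⟨C, hC, rfl⟩, hvert_eq hC hx, hvert_eq hC hy⟩
  · rintro s (⟨i, hi, hs⟩ | ⟨C, hC, rfl⟩) t (⟨j, hj, ht⟩ | ⟨C', hC', rfl⟩) a b hab hsa hsb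
    · obtain rfl := hf i hi j hj a b hab (s a) (s b) (hs a) (hsa ▸ ht a) (hs b) (hsb ▸ ht b)
      funext c
      exact Option.some_injective _ ((hs c).symm.trans (ht c))
    · exact (hfresh hi hC' hab (hsa ▸ hs a) (hsb ▸ hs b)).elim
    · exact (hfresh hj hC hab (hsa ▸ ht a) (hsb ▸ ht b)).elim
    · obtain rfl := eq_of_mem_of_mem hinter hC hC' (show (a, _) ≠ (b, _) by simp [hab])
        (hvert C hC a) (hvert C hC b) (hsa ▸ hvert C' hC' a) (hsb ▸ hvert C' hC' b)
      rfl
  · obtain ⟨t, ht⟩ := htuple i hi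
    exact ⟨t, Or.inl ⟨i, hi, ht⟩, ht⟩

namespace IsOA

variable {S : Set (κ → α)} (hS : IsOA S) {a b : κ} (hab : a ≠ b)

noncomputable def cover (x y : α) : κ → α := (hS.exists_mem a b hab x y).choose

lemma cover_mem (x y : α) : hS.cover hab x y ∈ S := (hS.exists_mem a b hab x y).choose_spec.1

lemma cover_apply_left (x y : α) : hS.cover hab x y a = x :=
  (hS.exists_mem a b hab x y).choose_spec.2.1

lemma cover_apply_right (x y : α) : hS.cover hab x y b = y :=
  (hS.exists_mem a b hab x y).choose_spec.2.2

lemma cover_eq {t : κ → α} (ht : t ∈ S) : hS.cover hab (t a) (t b) = t :=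
  hS.eq_of_eq_of_eq _ (hS.cover_mem hab _ _) t ht a b hab (hS.cover_apply_left hab _ _)
    (hS.cover_apply_right hab _ _)

lemma eq_of_cover_eq_of_cover_eq {c d : κ} (hcd : c ≠ d) {x y x' y' : α}
    (hc : hS.cover hab x y c = hS.cover hab x' y' c)
    (hd : hS.cover hab x y d = hS.cover hab x' y' d) : x = x' ∧ y = y' := by
  have h := hS.eq_of_eq_of_eq _ (hS.cover_mem hab x y) _ (hS.cover_mem hab x' y') c d hcd hc hd
  refine ⟨?_, ?_⟩
  · rw [← hS.cover_apply_left hab x y, h, hS.cover_apply_left]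
  · rw [← hS.cover_apply_right hab x y, h, hS.cover_apply_right]

end IsOA

section Squares

variable {k n : ℕ} (T : Fin k → Fin n → Fin n → Option (Fin n))

def cellTuple (p : Fin n × Fin n) : Option (Option (Fin k)) → Option (Fin n)
  | none => some p.1
  | some none => some p.2
  | some (some m) => T m p.1 p.2

def support : Finset (Fin n × Fin n) := {p | ∃ m, T m p.1 p.2 ≠ none}

variable {T}

lemma isPartialOA_cellTuple (hrow : ∀ m i j j' x, T m i j = some x → T m i j' = some x → j = j')
    (hcol : ∀ m i i' j x, T m i j = some x → T m i' j = some x → i = i')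
    (horth : ∀ m m' i j i' j' x x', m ≠ m' → T m i j = some x → T m' i j = some x' →
      T m i' j' = some x → T m' i' j' = some x' → i = i' ∧ j = j') :
    IsPartialOA (support T) (cellTuple T) := by
  rintro ⟨i, j⟩ - ⟨i', j'⟩ - a b hab x y ha ha' hb hb'
  rcases a with _ | _ | m <;> rcases b with _ | _ | m' <;>
    simp only [cellTuple, Option.some.injEq, Prod.mk.injEq] at * <;> subst_vars
  · exact absurd rfl hab
  · exact ⟨rfl, rfl⟩
  · exact ⟨rfl, hrow _ _ _ _ _ hb hb'⟩
  · exact ⟨rfl, rfl⟩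
  · exact absurd rfl hab
  · exact ⟨hcol _ _ _ _ _ hb hb', rfl⟩
  · exact ⟨rfl, hrow _ _ _ _ _ ha ha'⟩
  · exact ⟨hcol _ _ _ _ _ ha ha', rfl⟩
  · exact horth m m' _ _ _ _ _ _ (by simpa using hab) ha hb ha' hb'

lemma card_support_filter_fst (i : Fin n) :
    #{p ∈ support T | p.1 = i} = #{j | ∃ m, T m i j ≠ none} :=
  card_nbij' Prod.snd (Prod.mk i) (by rintro ⟨i', j⟩ hp; simp_all [support]; exact hp.2 ▸ hp.1)
    (fun j hj => by simp_all [support]) (by rintro ⟨i', j⟩ hp; simp_all [support])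
    (fun j _ => rfl)

lemma card_support_filter_snd (j : Fin n) :
    #{p ∈ support T | p.2 = j} = #{i | ∃ m, T m i j ≠ none} :=
  card_nbij' Prod.fst (Prod.mk · j) (by rintro ⟨i, j'⟩ hp; simp_all [support]; exact hp.2 ▸ hp.1)
    (fun i hi => by simp_all [support]) (by rintro ⟨i, j'⟩ hp; simp_all [support])
    (fun i _ => rfl)

lemma occCount_cellTuple_le {B : ℝ} {M : ℕ} (hM : ∀ z : ℕ, (z : ℝ) ≤ B → z ≤ M)
    (hrows : ∀ i, (#{j | ∃ m, T m i j ≠ none} : ℝ) ≤ B)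
    (hcols : ∀ j, (#{i | ∃ m, T m i j ≠ none} : ℝ) ≤ B)
    (hsyms : ∀ m x, (#{p : Fin n × Fin n | T m p.1 p.2 = some x} : ℝ) ≤ B) :
    ∀ a x, occCount (support T) (cellTuple T) a x ≤ M
  | none, i => hM _ (by simpa [occCount, cellTuple, card_support_filter_fst] using hrows i)
  | some none, j => hM _ (by simpa [occCount, cellTuple, card_support_filter_snd] using hcols j)
  | some (some m), x => hM _ <| by
      convert hsyms m x using 3
      unfold occCount
      congr 1
      ext p
      simp [support, cellTuple]
      exact fun h => ⟨m, by simp [h]⟩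

lemma card_support_le {B : ℝ} (hrows : ∀ i, (#{j | ∃ m, T m i j ≠ none} : ℝ) ≤ B) :
    (#(support T) : ℝ) ≤ B * n := by
  rw [card_eq_sum_card_fiberwise (f := Prod.fst) (t := univ) fun _ _ => mem_univ _]
  push_cast
  calc ∑ i, (#{p ∈ support T | p.1 = i} : ℝ) ≤ ∑ _i : Fin n, B :=
        sum_le_sum fun i _ => card_support_filter_fst i ▸ hrows i
    _ = B * n := by simp [mul_comm]

lemma cellTuple_ne_none (hk : k ≤ 1) : ∀ p ∈ support T, ∀ a, cellTuple T p a ≠ none := by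
  rintro p hp (_ | _ | m)
  · simp [cellTuple]
  · simp [cellTuple]
  · obtain ⟨m', hm'⟩ : ∃ m', T m' p.1 p.2 ≠ none := by simpa [support] using hp
    rwa [(Fin.subsingleton_iff_le_one.2 hk).elim m' m] at hm'

end Squares

lemma exists_mols_of_isOA {k n : ℕ} {T : Fin k → Fin n → Fin n → Option (Fin n)}
    {S : Set (Option (Option (Fin k)) → Fin n)} (hS : IsOA S)
    (hext : ∀ p ∈ support T, ∃ t ∈ S, ∀ a x, cellTuple T p a = some x → t a = x) :
    ∃ L : Fin k → Fin n → Fin n → Fin n,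
      (∀ m i j j', L m i j = L m i j' → j = j') ∧
      (∀ m i i' j, L m i j = L m i' j → i = i') ∧
      (∀ m m' i j i' j', m ≠ m' → L m i j = L m i' j' → L m' i j = L m' i' j' →
        i = i' ∧ j = j') ∧
      (∀ m i j x, T m i j = some x → L m i j = x) := by
  have hrc : (none : Option (Option (Fin k))) ≠ some none := by simp
  refine ⟨fun m i j => hS.cover hrc i j (some (some m)), fun m i j j' h => ?_,
    fun m i i' j h => ?_, fun m m' i j i' j' hmm' h h' => ?_, fun m i j x h => ?_⟩
  · exact (hS.eq_of_cover_eq_of_cover_eq hrc (c := some (some m)) (d := none) (by simp) h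
      (by rw [hS.cover_apply_left, hS.cover_apply_left])).2
  · exact (hS.eq_of_cover_eq_of_cover_eq hrc (c := some (some m)) (d := some none) (by simp) h
      (by rw [hS.cover_apply_right, hS.cover_apply_right])).1
  · exact hS.eq_of_cover_eq_of_cover_eq hrc (by simpa using hmm') h h'
  · obtain ⟨t, ht, hpt⟩ := hext (i, j) (by simp [support]; exact ⟨m, by simp [h]⟩)
    have h₀ := hpt none i rfl
    have h₁ := hpt (some none) j rfl
    have h₂ := hpt (some (some m)) x h
    simp only at h₀ h₁ ⊢
    rw [← h₀, ← h₁, hS.cover_eq hrc ht, h₂]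

lemma floor_cap_room {r n D : ℕ} {x : ℝ} (hrx : r * x ≤ 1 / 10^7) (hxn : 100 ≤ x * n)
    (hD : (D : ℝ) ≤ 9 * x * n * n) :
    0 < ⌊19/2 * x * n⌋₊ ∧ (r - 1) * ⌊19/2 * x * n⌋₊ + D / ⌊19/2 * x * n⌋₊ < n := by
  set M := ⌊19/2 * x * n⌋₊
  have hM := Nat.floor_le (a := 19/2 * x * n) (by linarith)
  have hM' := Nat.lt_floor_add_one (19/2 * x * n)
  have hMpos : (0 : ℝ) < M := by linarith
  have hnpos : (0 : ℝ) < n := by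
    rcases Nat.eq_zero_or_pos n with rfl | h
    · norm_num at hxn
    · exact_mod_cast h
  refine ⟨by exact_mod_cast hMpos, ?_⟩
  have hdiv : ((D / M : ℕ) : ℝ) ≤ 36/37 * n := by
    refine Nat.cast_div_le.trans ((div_le_iff₀ hMpos).2 ?_)
    have hM37 : 37/4 * (x * n) ≤ M := by linarith
    nlinarith [mul_le_mul_of_nonneg_left hM37 hnpos.le]
  have hrM : ((r - 1 : ℕ) : ℝ) * M ≤ 1 / 10^6 * n := by
    have : ((r - 1 : ℕ) : ℝ) ≤ r := by exact_mod_cast Nat.sub_le r 1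
    nlinarith
  have : (((r - 1) * M + D / M : ℕ) : ℝ) < n := by
    push_cast
    linarith
  exact_mod_cast this

lemma exists_cap {r : ℕ} (hr : 3 ≤ r) {ε cr cr' : ℝ} (hε : 0 < ε)
    (hcr : cr = if r = 3 then 1/25 else 9/(10^7 * (r : ℝ)^3))
    (hcr' : cr' = if r = 3 then 1/25 else 1/(10^6 * (r : ℝ)^3)) :
    ∃ ε' > 0, ∃ n₀ : ℕ, ∀ n ≥ n₀, ∃ M : ℕ,
      (∀ z : ℕ, (z : ℝ) ≤ (cr - ε) * n → z ≤ M) ∧ (1 - cr' + ε') * n ≤ n - M ∧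
      (r ≠ 3 → ∀ D : ℕ, (D : ℝ) ≤ (cr - ε) * n * n → 0 < M ∧ (r - 1) * M + D / M < n) := by
  rcases eq_or_ne r 3 with rfl | hr3
  · simp only [if_true] at hcr hcr'
    subst hcr hcr'
    set ε' := min ε (1/50)
    have hε' : ε' ≤ ε := min_le_left _ _
    have hε'' : ε' ≤ 1/50 := min_le_right _ _
    refine ⟨ε', lt_min hε (by norm_num), 0, fun n _ => ⟨⌊(1/25 - ε') * n⌋₊, fun z hz => ?_, ?_,
      fun h => absurd rfl h⟩⟩
    · exact Nat.le_floor (hz.trans (by gcongr))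
    · have := Nat.floor_le (a := (1/25 - ε') * n) (by have := n.cast_nonneg (α := ℝ); nlinarith)
      linarith
  -- `c_r = 9x` and `c'_r = 10x`; the cap `(19/2) x n` lies strictly between `c_r n` and `c'_r n`.
  set x : ℝ := 1 / (10^7 * r^3) with hx
  have hr' : (4 : ℝ) ≤ r := by exact_mod_cast (show 4 ≤ r by omega)
  replace hcr : cr = 9 * x := by rw [hcr, if_neg hr3, hx]; ring
  replace hcr' : cr' = 10 * x := by rw [hcr', if_neg hr3, hx]; field_simp
  have hrx : r * x ≤ 1 / 10^7 := by
    have : (r : ℝ) ≤ r^3 := by nlinarith [mul_le_mul hr' hr' (by norm_num) (by linarith)]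
    rw [hx, mul_one_div, div_le_div_iff₀ (by positivity) (by norm_num)]
    linarith
  refine ⟨x / 2, by positivity, 10^9 * r^3, fun n hn => ⟨⌊19/2 * x * n⌋₊, fun z hz => ?_, ?_,
    fun _ D hD => floor_cap_room hrx ?_ ?_⟩⟩
  all_goals
    have hxn : 100 ≤ x * n := by
      have hn' : (10^9 * r^3 : ℝ) ≤ n := by exact_mod_cast hn
      rw [hx, div_mul_eq_mul_div, one_mul, le_div_iff₀ (by positivity)]
      linarith
    have hεn : 0 ≤ ε * n := by positivity
  · exact Nat.le_floor (by nlinarith)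
  · have := Nat.floor_le (a := 19/2 * x * n) (by linarith)
    rw [hcr']
    linarith
  · exact hxn
  · rw [hcr] at hD
    nlinarith

/-- Suppose `1/n ≪ η ≪ ε, 1/r`, `r ≥ 3` and the `K_r`-decomposition theorem for balanced
`r`-partite `K_r`-divisible graphs of minimum partite degree `(1 - c'_r + ε')n` holds (with
`c'_3 = 1/25`, `c'_r = 1/(10⁶r³)`).  Let `c_3 = 1/25` and `c_r = 9/(10⁷r³)` for `r ≥ 4`.
Then any sequence `T 1, ..., T (r-2)` of mutually orthogonal partial `n × n` Latin squares
in which every row, every column, and every coloured symbol is used at most `(c_r - ε)n`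
times can be completed to a sequence of mutually orthogonal Latin squares. -/
theorem stmt18 (r : ℕ) (hr : 3 ≤ r) (ε : ℝ) (hε : 0 < ε)
    (cr cr' : ℝ)
    (hcr : cr = if r = 3 then 1/25 else 9/(10^7 * (r : ℝ)^3))
    (hcr' : cr' = if r = 3 then 1/25 else 1/(10^6 * (r : ℝ)^3))
    (hdecomp : ∀ ε' : ℝ, 0 < ε' → ∃ n₁ : ℕ, ∀ n : ℕ, n₁ ≤ n →
      ∀ (β : Type) [Fintype β] [DecidableEq β],
      ∀ (V : Fin r → Finset β) (G : SimpleGraph β),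
        (∀ j₁ j₂ : Fin r, j₁ ≠ j₂ → Disjoint (V j₁) (V j₂)) →
        (∀ x : β, ∃ j, x ∈ V j) →
        (∀ j, (V j).card = n) →
        (∀ x y : β, G.Adj x y → ∃ j₁ j₂ : Fin r, j₁ ≠ j₂ ∧ x ∈ V j₁ ∧ y ∈ V j₂) →
        (∀ j₁ j₂ : Fin r, ∀ v : β, v ∉ V j₁ → v ∉ V j₂ →
          ((V j₁ : Set β) ∩ G.neighborSet v).ncard =
            ((V j₂ : Set β) ∩ G.neighborSet v).ncard) →
        (∀ (j : Fin r) (v : β), v ∉ V j →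
          (1 - cr' + ε') * n ≤ (((V j : Set β) ∩ G.neighborSet v).ncard : ℝ)) →
        HasKrDecomp r G) :
    ∃ n₀ : ℕ, ∀ n : ℕ, n₀ ≤ n →
    ∀ T : Fin (r - 2) → Fin n → Fin n → Option (Fin n),
      (∀ m i j j' k, T m i j = some k → T m i j' = some k → j = j') →
      (∀ m i i' j k, T m i j = some k → T m i' j = some k → i = i') →
      (∀ m m' i j i' j' k k', m ≠ m' →
        T m i j = some k → T m' i j = some k' →
        T m i' j' = some k → T m' i' j' = some k' → i = i' ∧ j = j') →
      (∀ i : Fin n,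
        ((Finset.univ.filter fun j : Fin n => ∃ m, T m i j ≠ none).card : ℝ) ≤ (cr - ε) * n) →
      (∀ j : Fin n,
        ((Finset.univ.filter fun i : Fin n => ∃ m, T m i j ≠ none).card : ℝ) ≤ (cr - ε) * n) →
      (∀ (m : Fin (r - 2)) (k : Fin n),
        ((Finset.univ.filter fun p : Fin n × Fin n => T m p.1 p.2 = some k).card : ℝ) ≤
          (cr - ε) * n) →
      ∃ L : Fin (r - 2) → Fin n → Fin n → Fin n,
        (∀ m i j j', L m i j = L m i j' → j = j') ∧
        (∀ m i i' j, L m i j = L m i' j → i = i') ∧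
        (∀ m m' i j i' j', m ≠ m' → L m i j = L m i' j' → L m' i j = L m' i' j' →
          i = i' ∧ j = j') ∧
        (∀ m i j k, T m i j = some k → L m i j = k) := by
  obtain ⟨ε', hε', n₀, hcap⟩ := exists_cap hr hε hcr hcr'
  obtain ⟨n₁, hn₁⟩ := hdecomp ε' hε'
  refine ⟨max n₀ n₁, fun n hn T hrow hcol horth hrows hcols hsyms => ?_⟩
  obtain ⟨M, hM, hδ, hroom⟩ := hcap n (le_of_max_le_left hn)
  have hκ : Fintype.card (Option (Option (Fin (r - 2)))) = r := by
    simp only [Fintype.card_option, Fintype.card_fin]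
    omega
  have hf := isPartialOA_cellTuple hrow hcol horth
  have hocc := occCount_cellTuple_le hM hrows hcols hsyms
  obtain ⟨g, hg, htot, hgocc, hfg⟩ : ∃ g, IsPartialOA (support T) g ∧
      (∀ p ∈ support T, ∀ a, g p a ≠ none) ∧ (∀ a x, occCount (support T) g a x ≤ M) ∧
      ∀ p ∈ support T, ∀ a x, cellTuple T p a = some x → g p a = some x := by
    rcases eq_or_ne r 3 with rfl | hr3
    · exact ⟨cellTuple T, hf, cellTuple_ne_none le_rfl, hocc, fun _ _ _ _ h => h⟩
    · obtain ⟨hM₀, hroom⟩ := hroom hr3 _ (card_support_le hrows)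
      exact exists_total_extension hM₀ hf hocc (by simpa [hκ] using hroom)
  have hKr := hasKrDecomp_leaveGraph hκ (Fintype.card_fin n) (hn₁ n (le_of_max_le_right hn) _)
    hg htot hgocc hδ
  obtain ⟨S, hS, hSg⟩ := exists_isOA_of_hasKrDecomp hg htot (by rwa [hκ])
  refine exists_mols_of_isOA hS fun p hp => ?_
  obtain ⟨t, ht, hgt⟩ := hSg p hp
  exact ⟨t, ht, fun a x h => Option.some_injective _ ((hgt a).symm.trans (hfg p hp a x h))⟩
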